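/- arXiv:2209.13053 — 3 statements merged into one kernel-verified Lean document; each statement's English description precedes it below -/
import Mathlib

section
/- Suppose v(t) = v₀ + u·(t − t₀) with u > 0, k > 0, and at t₀ the strict margin condition −u + k·(v_max − v₀) ≥ σ holds where σ = k·u_M·T_d with u_M ≥ u and T_d > 0. Then the first time t₁ > t₀ at which −u + k·(v_max − v(t)) = 0 satisfies t₁ ≥ t₀ + T_d. -/
theorem min_interevent_time_max_speed (v₀ v_max u k u_M T_d t₀ t₁ : ℝ)
    (hu : u > 0) (hk : k > 0) (hTd : T_d > 0) (huM : u_M ≥ u)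
    (hmargin : -u + k * (v_max - v₀) ≥ k * u_M * T_d)
    (ht₁ : t₁ > t₀)
    (hzero : -u + k * (v_max - (v₀ + u * (t₁ - t₀))) = 0) :
    t₁ ≥ t₀ + T_d := by
  nlinarith [mul_pos hk hu, mul_le_mul_of_nonneg_left huM (le_of_lt hk)]
end

section
/- Suppose v(t) = v₀ + u·(t − t₀) with u < 0, k > 0, and at t₀ the margin condition u + k·(v₀ − v_min) ≥ k·u_M·T_d holds where u_M ≥ |u| and T_d > 0. Then the first time t₂ > t₀ at which u + k·(v(t) − v_min) = 0 satisfies t₂ ≥ t₀ + T_d. -/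
theorem min_interevent_time_min_speed (v₀ v_min u k u_M T_d t₀ t₂ : ℝ)
    (hu : u < 0) (hk : k > 0) (hTd : T_d > 0) (huM : u_M ≥ |u|)
    (hmargin : u + k * (v₀ - v_min) ≥ k * u_M * T_d)
    (ht₂ : t₂ > t₀)
    (hzero : u + k * ((v₀ + u * (t₂ - t₀)) - v_min) = 0) :
    t₂ ≥ t₀ + T_d := by
  rw [abs_of_neg hu] at huM
  have hku : 0 < k * (-u) := mul_pos hk (neg_pos.mpr hu)
  have h1 : k * u_M * T_d ≥ k * (-u) * T_d := by nlinarith [mul_nonneg (mul_pos hk hTd).le (sub_nonneg.mpr huM)]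
  have h2 : k * (-u) * (t₂ - t₀) ≥ k * (-u) * T_d := by nlinarith
  have := le_of_mul_le_mul_left h2 hku
  linarith
end

section
/- If b : ℝ → ℝ is differentiable, b(0) ≥ 0, and b'(t) ≥ −γ(b(t)) for all t ≥ 0 where γ : ℝ → ℝ is locally Lipschitz, strictly increasing, and γ(0) = 0 (a class-K function extended to ℝ), then b(t) ≥ 0 for all t ≥ 0. -/
theorem classK_forward_invariance (b γ : ℝ → ℝ)
    (hb : Differentiable ℝ b)
    (hγlip : LocallyLipschitz γ) (hγmono : StrictMono γ) (hγ0 : γ 0 = 0)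
    (h0 : b 0 ≥ 0)
    (hderiv : ∀ t ≥ (0 : ℝ), deriv b t ≥ -γ (b t)) :
    ∀ t ≥ (0 : ℝ), b t ≥ 0 := by
  intro t ht
  by_contra hneg
  push_neg at hneg
  set S : Set ℝ := Set.Icc (0:ℝ) t ∩ {x | 0 ≤ b x} with hS
  have hSclosed : IsClosed S :=
    isClosed_Icc.inter (isClosed_le continuous_const hb.continuous)
  have h0mem : (0:ℝ) ∈ S := ⟨⟨le_refl 0, ht⟩, h0⟩
  have hne : S.Nonempty := ⟨0, h0mem⟩
  have hbdd : BddAbove S := ⟨t, fun x hx => hx.1.2⟩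
  set s := sSup S with hs
  have hsmem : s ∈ S := hSclosed.csSup_mem hne hbdd
  obtain ⟨⟨hs0, hst⟩, hbs⟩ := hsmem
  have hslt : s < t := by
    rcases lt_or_eq_of_le hst with h | h
    · exact h
    · exfalso; rw [h] at hbs; exact absurd hbs (not_le.mpr hneg)
  have hbx : ∀ x ∈ Set.Ioo s t, b x < 0 := by
    intro x hx
    by_contra hxn
    push_neg at hxn
    have : x ∈ S := ⟨⟨le_of_lt (lt_of_le_of_lt hs0 hx.1), le_of_lt hx.2⟩, hxn⟩
    exact absurd (le_csSup hbdd this) (not_le.mpr hx.1)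
  have hmono : MonotoneOn b (Set.Icc s t) := by
    apply monotoneOn_of_deriv_nonneg (convex_Icc s t) hb.continuous.continuousOn
    · intro x _
      exact (hb x).differentiableWithinAt
    · intro x hx
      rw [interior_Icc] at hx
      have hx0 : (0:ℝ) ≤ x := le_of_lt (lt_of_le_of_lt hs0 hx.1)
      have hγneg : γ (b x) < 0 := by
        have := hγmono (hbx x hx)
        rwa [hγ0] at this
      calc (0:ℝ) ≤ -γ (b x) := by linarith
        _ ≤ deriv b x := hderiv x hx0
  have : b s ≤ b t := hmono ⟨le_refl s, le_of_lt hslt⟩ ⟨le_of_lt hslt, le_refl t⟩ (le_of_lt hslt)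
  have hbs2 : (0:ℝ) ≤ b s := hbs
  linarith
end
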